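/- The quotient of the monoid of universally convergent basic sequences on the edgeless cube Q_L by ∼, with operation induced by concatenation, is a group extending the group generated by finite basic sequences. Moreover, letting k be the least common multiple of the orders of the elements of the symmetric group S₂₄: for every universally convergent basic sequence σ⃗, the (k−1)-fold self-concatenation σ⃗^{k−1} is universally convergent and represents a two-sided inverse of the class of σ⃗, i.e. σ⃗^{k} ∼ the empty sequence; hence every element of the quotient group has order at most k. -/

import Mathlib

universe u v

namespace InfRubik

/-- The three axes of the cube. -/
inductive Axis : Type
  | x | y | z
  deriving DecidableEq

/-- The six colors of the Rubik's cube.  A *configuration* is a map from cells to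
`Option Color`, where `none` plays the role of the non-color `NaC`. -/
inductive Color : Type
  | red | white | green | orange | yellow | blue
  deriving DecidableEq

/-- The set `L̄† = -L ∪ {0} ∪ L ∪ {±∞}` of extended coordinates. -/
inductive ExtCoord (L : Type u) : Type u
  | neg : L → ExtCoord L
  | zero : ExtCoord L
  | pos : L → ExtCoord L
  | negInf : ExtCoord L
  | posInf : ExtCoord L

namespace ExtCoord

variable {L : Type u}

/-- The reflection `r ↦ -r`. -/
def reflect : ExtCoord L → ExtCoord L
  | .neg r => .pos r
  | .zero => .zero
  | .pos r => .neg r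
  | .negInf => .posInf
  | .posInf => .negInf

@[simp] theorem reflect_reflect (a : ExtCoord L) : a.reflect.reflect = a := by
  cases a <;> rfl

/-- Whether a coordinate is `±∞`. -/
def isInfB : ExtCoord L → Bool
  | .negInf => true
  | .posInf => true
  | _ => false

@[simp] theorem isInfB_reflect (a : ExtCoord L) : a.reflect.isInfB = a.isInfB := by
  cases a <;> rfl

/-- Whether a coordinate is `0`. -/
def isZeroB : ExtCoord L → Bool
  | .zero => true
  | _ => false

@[simp] theorem isZeroB_reflect (a : ExtCoord L) : a.reflect.isZeroB = a.isZeroB := by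
  cases a <;> rfl

end ExtCoord

/-- A point of the ambient space `L̄† × L̄† × L̄†`. -/
abbrev Triple (L : Type u) := ExtCoord L × ExtCoord L × ExtCoord L

/-- The coordinate of a point along an axis. -/
def Triple.coord {L : Type u} : Axis → Triple L → ExtCoord L
  | .x, p => p.1
  | .y, p => p.2.1
  | .z, p => p.2.2

/-- Quarter-turn rotation of the ambient space about an axis (right-hand rule). -/
def rot {L : Type u} : Axis → Triple L → Triple L
  | .x, p => (p.1, p.2.2.reflect, p.2.1)
  | .y, p => (p.2.2, p.2.1, p.1.reflect)
  | .z, p => (p.2.1.reflect, p.1, p.2.2)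

/-- Inverse quarter-turn rotation of the ambient space about an axis. -/
def rotInv {L : Type u} : Axis → Triple L → Triple L
  | .x, p => (p.1, p.2.2, p.2.1.reflect)
  | .y, p => (p.2.2.reflect, p.2.1, p.1)
  | .z, p => (p.2.1, p.1.reflect, p.2.2)

@[simp] theorem rotInv_rot {L : Type u} (i : Axis) (p : Triple L) : rotInv i (rot i p) = p := by
  cases i <;> simp [rot, rotInv]

@[simp] theorem rot_rotInv {L : Type u} (i : Axis) (p : Triple L) : rot i (rotInv i p) = p := by
  cases i <;> simp [rot, rotInv]

/-- The number of infinite coordinates of a point. -/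
def infCount {L : Type u} (p : Triple L) : ℕ :=
  (if p.1.isInfB then 1 else 0) + (if p.2.1.isInfB then 1 else 0) +
    (if p.2.2.isInfB then 1 else 0)

/-- The number of zero coordinates of a point. -/
def zeroCount {L : Type u} (p : Triple L) : ℕ :=
  (if p.1.isZeroB then 1 else 0) + (if p.2.1.isZeroB then 1 else 0) +
    (if p.2.2.isZeroB then 1 else 0)

theorem infCount_rot {L : Type u} (i : Axis) (p : Triple L) : infCount (rot i p) = infCount p := by
  obtain ⟨a, b, c⟩ := p
  cases i <;> cases a <;> cases b <;> cases c <;> rfl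

theorem infCount_rotInv {L : Type u} (i : Axis) (p : Triple L) :
    infCount (rotInv i p) = infCount p := by
  obtain ⟨a, b, c⟩ := p
  cases i <;> cases a <;> cases b <;> cases c <;> rfl

@[simp] theorem coord_rot_self {L : Type u} (i : Axis) (p : Triple L) :
    (rot i p).coord i = p.coord i := by
  cases i <;> rfl

@[simp] theorem coord_rotInv_self {L : Type u} (i : Axis) (p : Triple L) :
    (rotInv i p).coord i = p.coord i := by
  cases i <;> rfl

/-- A cell of the *edgeless* cube `Q_L`: a point of the ambient space with exactly one
infinite coordinate. -/
def Cell (L : Type u) : Type u := {p : Triple L // infCount p = 1}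

open Classical in
/-- The underlying map on points of the quarter-turn twist `T_{i,α}`. -/
noncomputable def qtTriple {L : Type u} (i : Axis) (α : ExtCoord L) (p : Triple L) : Triple L :=
  if p.coord i = α then rot i p else p

open Classical in
/-- The underlying map on points of the inverse quarter-turn twist `T_{i,α}⁻¹`. -/
noncomputable def qtTripleInv {L : Type u} (i : Axis) (α : ExtCoord L) (p : Triple L) : Triple L :=
  if p.coord i = α then rotInv i p else p

theorem qtTripleInv_qtTriple {L : Type u} (i : Axis) (α : ExtCoord L) (p : Triple L) :
    qtTripleInv i α (qtTriple i α p) = p := by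
  classical
  by_cases h : p.coord i = α <;> simp [qtTriple, qtTripleInv, h]

theorem qtTriple_qtTripleInv {L : Type u} (i : Axis) (α : ExtCoord L) (p : Triple L) :
    qtTriple i α (qtTripleInv i α p) = p := by
  classical
  by_cases h : p.coord i = α <;> simp [qtTriple, qtTripleInv, h]

theorem infCount_qtTriple {L : Type u} (i : Axis) (α : ExtCoord L) (p : Triple L) :
    infCount (qtTriple i α p) = infCount p := by
  classical
  by_cases h : p.coord i = α <;> simp [qtTriple, h, infCount_rot]

theorem infCount_qtTripleInv {L : Type u} (i : Axis) (α : ExtCoord L) (p : Triple L) :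
    infCount (qtTripleInv i α p) = infCount p := by
  classical
  by_cases h : p.coord i = α <;> simp [qtTripleInv, h, infCount_rotInv]

/-- The quarter-turn twist `T_{i,α}` of the edgeless cube, as a permutation of cells. -/
noncomputable def quarterTurn {L : Type u} (i : Axis) (α : ExtCoord L) : Equiv.Perm (Cell L) where
  toFun c := ⟨qtTriple i α c.1, by rw [infCount_qtTriple]; exact c.2⟩
  invFun c := ⟨qtTripleInv i α c.1, by rw [infCount_qtTripleInv]; exact c.2⟩
  left_inv c := Subtype.ext (qtTripleInv_qtTriple i α c.1)
  right_inv c := Subtype.ext (qtTriple_qtTripleInv i α c.1)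

/-- The basic twists of the edgeless cube: quarter turns, half turns and reverse
quarter turns of a single layer. -/
def IsBasic (L : Type u) (π : Equiv.Perm (Cell L)) : Prop :=
  ∃ (i : Axis) (α : ExtCoord L),
    π = quarterTurn i α ∨ π = quarterTurn i α ^ 2 ∨ π = (quarterTurn i α)⁻¹

/-! ### The edged cube -/

/-- How a quarter-turn about axis `i` transports the face tag of a cell. -/
def tagMap : Axis → Axis → Axis
  | .x, .x => .x
  | .x, .y => .z
  | .x, .z => .y
  | .y, .x => .z
  | .y, .y => .y
  | .y, .z => .x
  | .z, .x => .y
  | .z, .y => .x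
  | .z, .z => .z

@[simp] theorem tagMap_tagMap (i j : Axis) : tagMap i (tagMap i j) = j := by
  cases i <;> cases j <;> rfl

theorem isInfB_coord_tagMap_rot {L : Type u} (i j : Axis) (p : Triple L) :
    ((rot i p).coord (tagMap i j)).isInfB = (p.coord j).isInfB := by
  cases i <;> cases j <;> simp [rot, Triple.coord, tagMap]

theorem isInfB_coord_tagMap_rotInv {L : Type u} (i j : Axis) (p : Triple L) :
    ((rotInv i p).coord (tagMap i j)).isInfB = (p.coord j).isInfB := by
  cases i <;> cases j <;> simp [rotInv, Triple.coord, tagMap]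

/-- A cell of the *edged* cube `Q̄_L`: a point of the ambient space together with a tag
naming an axis, such that the coordinate along the tagged axis is infinite (the tag
indicates the face to which the cell belongs). -/
def ECell (L : Type u) : Type u := {q : Triple L × Axis // (q.1.coord q.2).isInfB = true}

open Classical in
/-- The underlying map of the quarter-turn twist `T_{i,α}` of the edged cube. -/
noncomputable def eqtFun {L : Type u} (i : Axis) (α : ExtCoord L) (q : Triple L × Axis) :
    Triple L × Axis :=
  if q.1.coord i = α then (rot i q.1, tagMap i q.2) else q

open Classical in
/-- The underlying map of the reverse quarter-turn twist of the edged cube. -/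
noncomputable def eqtFunInv {L : Type u} (i : Axis) (α : ExtCoord L) (q : Triple L × Axis) :
    Triple L × Axis :=
  if q.1.coord i = α then (rotInv i q.1, tagMap i q.2) else q

theorem eqtFunInv_eqtFun {L : Type u} (i : Axis) (α : ExtCoord L) (q : Triple L × Axis) :
    eqtFunInv i α (eqtFun i α q) = q := by
  classical
  by_cases h : q.1.coord i = α <;> simp [eqtFun, eqtFunInv, h]

theorem eqtFun_eqtFunInv {L : Type u} (i : Axis) (α : ExtCoord L) (q : Triple L × Axis) :
    eqtFun i α (eqtFunInv i α q) = q := by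
  classical
  by_cases h : q.1.coord i = α <;> simp [eqtFun, eqtFunInv, h]

theorem isInfB_eqtFun {L : Type u} (i : Axis) (α : ExtCoord L) (q : Triple L × Axis) :
    (((eqtFun i α q).1.coord (eqtFun i α q).2)).isInfB = ((q.1.coord q.2)).isInfB := by
  classical
  by_cases h : q.1.coord i = α <;> simp [eqtFun, h, isInfB_coord_tagMap_rot]

theorem isInfB_eqtFunInv {L : Type u} (i : Axis) (α : ExtCoord L) (q : Triple L × Axis) :
    (((eqtFunInv i α q).1.coord (eqtFunInv i α q).2)).isInfB = ((q.1.coord q.2)).isInfB := by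
  classical
  by_cases h : q.1.coord i = α <;> simp [eqtFunInv, h, isInfB_coord_tagMap_rotInv]

/-- The quarter-turn twist `T_{i,α}` of the edged cube, as a permutation of cells.  A face
twist moves, besides the cells of its face, also the coupled edge and corner cells of the
adjacent faces lying in the twisted layer. -/
noncomputable def equarterTurn {L : Type u} (i : Axis) (α : ExtCoord L) :
    Equiv.Perm (ECell L) where
  toFun c := ⟨eqtFun i α c.1, by rw [isInfB_eqtFun]; exact c.2⟩
  invFun c := ⟨eqtFunInv i α c.1, by rw [isInfB_eqtFunInv]; exact c.2⟩
  left_inv c := Subtype.ext (eqtFunInv_eqtFun i α c.1)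
  right_inv c := Subtype.ext (eqtFun_eqtFunInv i α c.1)

/-- The basic twists of the edged cube. -/
def IsEBasic (L : Type u) (π : Equiv.Perm (ECell L)) : Prop :=
  ∃ (i : Axis) (α : ExtCoord L),
    π = equarterTurn i α ∨ π = equarterTurn i α ^ 2 ∨ π = (equarterTurn i α)⁻¹

/-! ### Transfinite sequences of twists and their action on labellings -/

open Classical in
/-- The eventual value of an ordinal-indexed family of `Option`-values: `some v` if the family
stabilizes on `some v` before `lam`, and `none` otherwise. -/
noncomputable def eventualVal {X : Type u} (lam : Ordinal.{v})
    (g : ∀ η, η < lam → Option X) : Option X :=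
  if h : ∃ v : X, ∃ γ, γ < lam ∧ ∀ η (hη : η < lam), γ ≤ η → g η hη = some v
  then some h.choose else none

/-- Applying an ordinal-indexed sequence of permutations to an initial labelling:
`run σ f0 θ` is the labelling obtained after the first `θ` moves, with
`f_{η+1}(c) = f_η(σ_η⁻¹ c)` at successors and the eventual value (or `NaC = none`)
at limits. -/
noncomputable def run {Cl : Type v} {X : Type u} (σ : Ordinal.{v} → Equiv.Perm Cl)
    (f0 : Cl → Option X) (θ : Ordinal.{v}) : Cl → Option X :=
  Ordinal.limitRecOn (motive := fun _ => Cl → Option X) θ f0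
    (fun η fη c => fη ((σ η)⁻¹ c))
    (fun lam _ prev c => eventualVal lam (fun η h => prev η h c))

/-- A (transfinite) sequence of twists of length `len`, each of which satisfies the
predicate `B` (being a basic twist). -/
structure TwistSeq (Cl : Type v) (B : Equiv.Perm Cl → Prop) : Type (v + 1) where
  len : Ordinal.{v}
  seq : Ordinal.{v} → Equiv.Perm Cl
  basic : ∀ η, η < len → B (seq η)

namespace TwistSeq

variable {Cl : Type v} {B : Equiv.Perm Cl → Prop}

/-- The terminal labelling obtained by applying a sequence of twists to `f0`. -/
noncomputable def terminal (s : TwistSeq Cl B) {X : Type u} (f0 : Cl → Option X) :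
    Cl → Option X :=
  run s.seq f0 s.len

/-- A sequence of twists is convergent over `f0` if the terminal labelling is legal,
i.e. never takes the value `NaC = none`. -/
def ConvOver (s : TwistSeq Cl B) {X : Type u} (f0 : Cl → Option X) : Prop :=
  ∀ c, s.terminal f0 c ≠ none

/-- A sequence of twists is universally convergent if it is convergent over the identity
labelling. -/
def UnivConv (s : TwistSeq Cl B) : Prop := s.ConvOver (fun c => some c)

/-- A sequence is twist-finite if each twist occurs in it only finitely many times. -/
def TwistFinite (s : TwistSeq Cl B) : Prop :=
  ∀ π : Equiv.Perm Cl, {η : Ordinal | η < s.len ∧ s.seq η = π}.Finite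

/-- Two sequences are equivalent, `σ⃗ ∼ τ⃗`, when they produce the same terminal
configuration over every initial configuration. -/
def Sim (s t : TwistSeq Cl B) : Prop :=
  ∀ f : Cl → Option Color, s.terminal f = t.terminal f

/-- Concatenation of twist sequences: `s.concat t` performs `s` and then `t`. -/
noncomputable def concat (s t : TwistSeq Cl B) : TwistSeq Cl B where
  len := s.len + t.len
  seq := fun η => if η < s.len then s.seq η else t.seq (η - s.len)
  basic := by
    intro η hη
    by_cases h : η < s.len
    · simpa [h] using s.basic η h
    · have hc : 0 < t.len := by
        rcases eq_zero_or_pos t.len with h0 | h0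
        · rw [h0, add_zero] at hη; exact absurd hη h
        · exact h0
      have h2 : η - s.len < t.len := Ordinal.sub_lt_of_lt_add hη hc
      simpa [h] using t.basic _ h2

/-- The empty sequence of twists. -/
def empty (Cl : Type v) (B : Equiv.Perm Cl → Prop) : TwistSeq Cl B where
  len := 0
  seq := fun _ => 1
  basic := fun η hη => absurd hη (by simp)

/-- `n`-fold self-concatenation of a sequence of twists. -/
noncomputable def npow (s : TwistSeq Cl B) : ℕ → TwistSeq Cl B
  | 0 => empty Cl B
  | n + 1 => (npow s n).concat s

end TwistSeq

/-- Basic sequences of twists of the edgeless cube `Q_L`. -/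
abbrev BasicSeq (L : Type u) := TwistSeq (Cell L) (IsBasic L)

/-- Basic sequences of twists of the edged cube `Q̄_L`. -/
abbrev EBasicSeq (L : Type u) := TwistSeq (ECell L) (IsEBasic L)

/-- `f` is accessible from `f0` when some basic sequence applied to `f0` is convergent with
terminal configuration `f`. -/
def Accessible {Cl : Type v} (B : Equiv.Perm Cl → Prop) (f0 f : Cl → Option Color) : Prop :=
  ∃ s : TwistSeq Cl B, s.ConvOver f0 ∧ s.terminal f0 = f

/-- A labelling is legal if it never takes the value `NaC = none`. -/
def IsLegal {Cl : Type v} {X : Type u} (f : Cl → Option X) : Prop := ∀ c, f c ≠ none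

/-! ### Clusters, faces, and distinguished configurations -/

/-- The group of permutations of cells of the edgeless cube generated by the basic twists. -/
def twistGroup (L : Type u) : Subgroup (Equiv.Perm (Cell L)) :=
  Subgroup.closure {π | IsBasic L π}

/-- The cluster of a cell of the edgeless cube: its orbit under the group generated by the
basic twists. -/
def cluster {L : Type u} (c : Cell L) : Set (Cell L) :=
  {d | ∃ g ∈ twistGroup L, g c = d}

/-- The group of permutations of cells of the edged cube generated by the basic twists. -/
def etwistGroup (L : Type u) : Subgroup (Equiv.Perm (ECell L)) :=
  Subgroup.closure {π | IsEBasic L π}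

/-- The cluster of a cell of the edged cube. -/
def ecluster {L : Type u} (c : ECell L) : Set (ECell L) :=
  {d | ∃ g ∈ etwistGroup L, g c = d}

open Classical in
/-- The solved configuration of the edgeless cube: each face gets one of six distinct
colors. -/
noncomputable def fSolved (L : Type u) : Cell L → Option Color := fun c =>
  if c.1.1 = ExtCoord.posInf then some .red
  else if c.1.1 = ExtCoord.negInf then some .orange
  else if c.1.2.1 = ExtCoord.posInf then some .blue
  else if c.1.2.1 = ExtCoord.negInf then some .green
  else if c.1.2.2 = ExtCoord.posInf then some .white
  else some .yellow

/-- The color of each face: the face is named by the axis and the sign (`true` = `+∞`). -/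
def faceColor : Axis → Bool → Color
  | .x, true => .red
  | .x, false => .orange
  | .y, true => .blue
  | .y, false => .green
  | .z, true => .white
  | .z, false => .yellow

open Classical in
/-- The solved configuration of the edged cube. -/
noncomputable def efSolved (L : Type u) : ECell L → Option Color := fun c =>
  if c.1.1.coord c.1.2 = ExtCoord.posInf then some (faceColor c.1.2 true)
  else some (faceColor c.1.2 false)

/-- A center cell of the edgeless cube: two of its coordinates are `0`. -/
def IsCenter {L : Type u} (c : Cell L) : Prop := zeroCount c.1 = 2

/-- The global rotation of the whole cube about an axis, as a permutation of the cells of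
the edgeless cube. -/
def rotAllPerm {L : Type u} (i : Axis) : Equiv.Perm (Cell L) where
  toFun c := ⟨rot i c.1, by rw [infCount_rot]; exact c.2⟩
  invFun c := ⟨rotInv i c.1, by rw [infCount_rotInv]; exact c.2⟩
  left_inv c := Subtype.ext (rotInv_rot i c.1)
  right_inv c := Subtype.ext (rot_rotInv i c.1)

/-- The group of global rotations of the edgeless cube. -/
def rotGroup (L : Type u) : Subgroup (Equiv.Perm (Cell L)) :=
  Subgroup.closure (Set.range (rotAllPerm (L := L)))

/-- A configuration of the edgeless cube is standard if every non-center cluster contains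
exactly four cells of each of the six colors, and its restriction to the center cluster is
obtained from the solved configuration by a global rotation of the cube. -/
def Standard {L : Type u} (f : Cell L → Option Color) : Prop :=
  (∀ c : Cell L, ¬IsCenter c → ∀ γ : Color, {d ∈ cluster c | f d = some γ}.ncard = 4) ∧
  ∃ g ∈ rotGroup L, ∀ d : Cell L, IsCenter d → f d = fSolved L (g⁻¹ d)

/-- A configuration is invariant under all quarter-turn face twists. -/
def FaceInvariant {L : Type u} (f : Cell L → Option Color) : Prop :=
  ∀ (i : Axis) (α : ExtCoord L), α.isInfB = true →
    ∀ c : Cell L, f ((quarterTurn i α)⁻¹ c) = f c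

/-! ### Quadrants and cluster configurations -/

/-- The upper-right quadrant `D` of the Front face: the cells `(x, y, +∞)` with `x ∈ L`
and `y ∈ {0} ∪ L`; every non-center cluster has a unique representative in `D`. -/
def Dset (L : Type u) : Set (Cell L) :=
  {c | ∃ (a : L) (b : ExtCoord L), (b = ExtCoord.zero ∨ ∃ r : L, b = ExtCoord.pos r) ∧
    c.1 = (ExtCoord.pos a, b, ExtCoord.posInf)}

/-- Two cells lie in the same face quadrant (an image of `D` under a global rotation). -/
def SameQuadrant {L : Type u} (d d' : Cell L) : Prop :=
  ∃ g ∈ rotGroup L, d ∈ (fun c => g c) '' Dset L ∧ d' ∈ (fun c => g c) '' Dset L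

/-! ### Coupled cells of the edged cube -/

/-- Two cells of the edged cube are coupled if they occupy the same location but belong to
different faces (they are parts of a common edge or corner cubie). -/
def Coupled {L : Type u} (c c' : ECell L) : Prop := c.1.1 = c'.1.1 ∧ c.1.2 ≠ c'.1.2

/-- An edge cell: exactly two infinite coordinates. -/
def IsEdgeCell {L : Type u} (c : ECell L) : Prop := infCount c.1.1 = 2

/-- A corner cell: three infinite coordinates. -/
def IsCornerCell {L : Type u} (c : ECell L) : Prop := infCount c.1.1 = 3

/-- An edge-cross cell: an edge cell one of whose coordinates is `0`. -/
def IsEdgeCross {L : Type u} (c : ECell L) : Prop :=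
  IsEdgeCell c ∧ 0 < zeroCount c.1.1

end InfRubik

/-!
A basic twist rotates one layer of the cube, so it maps the set of cells whose positions are
images of the position of a given cell under the 24 rotations of the cube onto itself. On such
a finite invariant set a run that is legal at the end acts at every stage as a permutation:
successor steps compose it with a twist, and at a limit the finitely many cells stabilise at a
common stage. Hence a universally convergent `σ⃗` acts by a map `H` of cells (its terminal
labelling over any `f` is `f ∘ H`) which permutes a set of at most 24 cells around each cell, so
`H^[k] = id`. Concatenation composes these maps, and all the claims follow.
-/

namespace InfRubik

open Ordinal Order

section Run

variable {Cl : Type v} {X : Type u}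

theorem eventualVal_eq_some_iff {lam : Ordinal.{v}} {g : ∀ η, η < lam → Option X} {a : X} :
    eventualVal lam g = some a ↔ ∃ γ < lam, ∀ η (hη : η < lam), γ ≤ η → g η hη = some a := by
  unfold eventualVal
  split_ifs with h
  · simp only [Option.some_inj]
    refine ⟨by rintro rfl; exact h.choose_spec, fun ⟨γ, hγ, hg⟩ => ?_⟩
    obtain ⟨γ', hγ', hg'⟩ := h.choose_spec
    have hmax : max γ γ' < lam := max_lt hγ hγ'
    simpa [hg _ hmax (le_max_left _ _)] using (hg' _ hmax (le_max_right _ _)).symm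
  · simp only [false_iff]
    exact fun ⟨γ, hγ, hg⟩ => h ⟨a, γ, hγ, hg⟩

theorem eventualVal_eq_of_eventually_eq {lam γ : Ordinal.{v}} {g : ∀ η, η < lam → Option X}
    {a : Option X} (hγ : γ < lam) (hg : ∀ η (hη : η < lam), γ ≤ η → g η hη = a) :
    eventualVal lam g = a := by
  cases a with
  | some a => exact eventualVal_eq_some_iff.2 ⟨γ, hγ, hg⟩
  | none =>
    cases h : eventualVal lam g with
    | none => rfl
    | some b =>
      obtain ⟨γ', hγ', hg'⟩ := eventualVal_eq_some_iff.1 h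
      have hmax : max γ γ' < lam := max_lt hγ hγ'
      simpa [hg _ hmax (le_max_left _ _)] using hg' _ hmax (le_max_right _ _)

theorem eventualVal_add {a lam : Ordinal.{v}} (hlam : IsSuccLimit lam)
    (g : ∀ η, η < a + lam → Option X) :
    eventualVal (a + lam) g =
      eventualVal lam (fun η hη => g (a + η) ((add_lt_add_iff_left a).2 hη)) := by
  refine Option.ext fun x => ?_
  rw [eventualVal_eq_some_iff, eventualVal_eq_some_iff]
  constructor
  · rintro ⟨γ, hγ, hg⟩
    exact ⟨γ - a, sub_lt_of_lt_add hγ hlam.bot_lt, fun η hη hle =>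
      hg _ _ ((le_add_sub γ a).trans (add_le_add_right hle a))⟩
  · rintro ⟨γ, hγ, hg⟩
    refine ⟨a + γ, (add_lt_add_iff_left a).2 hγ, fun η hη hle => ?_⟩
    obtain ⟨δ, rfl⟩ := le_iff_exists_add.1 ((le_self_add (a := a) (b := γ)).trans hle)
    exact hg δ ((add_lt_add_iff_left a).1 hη) ((add_le_add_iff_left a).1 hle)

variable (σ : Ordinal.{v} → Equiv.Perm Cl) (f : Cl → Option X)

theorem run_zero : run σ f 0 = f :=
  limitRecOn_zero _ _ _

theorem run_add_one (η : Ordinal.{v}) (c : Cl) : run σ f (η + 1) c = run σ f η ((σ η)⁻¹ c) := by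
  rw [run, limitRecOn_add_one]
  rfl

theorem run_limit {lam : Ordinal.{v}} (hlam : IsSuccLimit lam) (c : Cl) :
    run σ f lam c = eventualVal lam (fun η _ => run σ f η c) := by
  rw [run, limitRecOn_limit _ _ _ _ hlam]
  rfl

theorem run_congr {τ : Ordinal.{v} → Equiv.Perm Cl} {θ : Ordinal.{v}}
    (h : ∀ η < θ, σ η = τ η) : run σ f θ = run τ f θ := by
  induction θ using limitRecOn with
  | zero => rw [run_zero, run_zero]
  | add_one δ ih =>
    funext c
    rw [run_add_one, run_add_one, ih fun η hη => h η (hη.trans (lt_add_one δ)),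
      h δ (lt_add_one δ)]
  | limit lam hlam ih =>
    funext c
    rw [run_limit _ _ hlam, run_limit _ _ hlam]
    congr
    funext η hη
    rw [ih η hη fun ζ hζ => h ζ (hζ.trans hη)]

theorem run_add (a δ : Ordinal.{v}) :
    run σ f (a + δ) = run (fun η => σ (a + η)) (run σ f a) δ := by
  induction δ using limitRecOn with
  | zero => rw [add_zero, run_zero]
  | add_one δ ih =>
    funext c
    rw [← add_assoc, run_add_one, run_add_one, ih]
  | limit lam hlam ih =>
    funext c
    rw [run_limit _ _ (isSuccLimit_add a hlam), run_limit _ _ hlam, eventualVal_add hlam]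
    congr
    funext η hη
    rw [ih η hη]

theorem run_eq_of_run_some_eq_some {η : Ordinal.{v}} {c d : Cl}
    (h : run σ (fun x => some x) η c = some d) : run σ f η c = f d := by
  induction η using limitRecOn generalizing c with
  | zero =>
    rw [run_zero] at h ⊢
    rw [Option.some_inj.1 h]
  | add_one η ih =>
    rw [run_add_one] at h ⊢
    exact ih h
  | limit lam hlam ih =>
    rw [run_limit _ _ hlam] at h ⊢
    obtain ⟨γ, hγ, hg⟩ := eventualVal_eq_some_iff.1 h
    exact eventualVal_eq_of_eventually_eq hγ fun η hη hle => ih η hη (hg η hη hle)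

theorem isLegal_run_natCast (hf : IsLegal f) (n : ℕ) : IsLegal (run σ f n) := by
  induction n with
  | zero => rwa [Nat.cast_zero, run_zero]
  | succ n ih =>
    intro c
    rw [Nat.cast_succ, run_add_one]
    exact ih _

theorem exists_lt_run_eq_run_limit {lam : Ordinal.{v}} (hlam : IsSuccLimit lam) {K : Set Cl}
    (hK : K.Finite) (hleg : ∀ c ∈ K, run σ f lam c ≠ none) :
    ∃ γ < lam, ∀ c ∈ K, run σ f γ c = run σ f lam c := by
  have hstab : ∀ c ∈ K, ∃ γ < lam, ∀ η < lam, γ ≤ η → run σ f η c = run σ f lam c := by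
    intro c hc
    obtain ⟨a, ha⟩ := Option.ne_none_iff_exists'.1 (hleg c hc)
    obtain ⟨γ, hγ, hg⟩ := eventualVal_eq_some_iff.1 ((run_limit σ f hlam c).symm.trans ha)
    exact ⟨γ, hγ, fun η hη hle => (hg η hη hle).trans ha.symm⟩
  choose! γ hγlt hγ using hstab
  have hsup : hK.toFinset.sup γ < lam :=
    (Finset.sup_lt_iff hlam.bot_lt).2 fun c hc => hγlt c (hK.mem_toFinset.1 hc)
  exact ⟨_, hsup, fun c hc => hγ c hc _ hsup (Finset.le_sup (hK.mem_toFinset.2 hc))⟩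

theorem exists_perm_run_some_eq {K : Set Cl} (hK : K.Finite) {θ : Ordinal.{v}}
    (hinv : ∀ η < θ, ∀ c, σ η c ∈ K ↔ c ∈ K)
    (hleg : ∀ c ∈ K, run σ (fun x => some x) θ c ≠ none) :
    ∃ e : Equiv.Perm K, ∀ c : K, run σ (fun x => some x) θ c = some (e c : Cl) := by
  induction θ using limitRecOn with
  | zero => exact ⟨1, fun c => by rw [run_zero]; rfl⟩
  | add_one δ ih =>
    have hδ := hinv δ (lt_add_one δ)
    obtain ⟨e, he⟩ := ih (fun η hη => hinv η (hη.trans (lt_add_one δ))) fun c hc => by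
      simpa [run_add_one] using hleg (σ δ c) ((hδ c).2 hc)
    refine ⟨e * ((σ δ).subtypePerm hδ)⁻¹, fun c => ?_⟩
    rw [run_add_one]
    exact he (((σ δ).subtypePerm hδ)⁻¹ c)
  | limit lam hlam ih =>
    obtain ⟨γ, hγ, hrun⟩ := exists_lt_run_eq_run_limit σ _ hlam hK hleg
    obtain ⟨e, he⟩ := ih γ hγ (fun η hη => hinv η (hη.trans hγ)) fun c hc => by
      rw [hrun c hc]; exact hleg c hc
    exact ⟨e, fun c => by rw [← hrun c c.2, he]⟩

end Run

namespace TwistSeq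

variable {Cl : Type v} {B : Equiv.Perm Cl → Prop} {X : Type u} {s s' t t' : TwistSeq Cl B}
  {H H' : Cl → Cl}

theorem terminal_empty (f : Cl → Option X) : (empty Cl B).terminal f = f :=
  run_zero _ f

theorem terminal_concat (s t : TwistSeq Cl B) (f : Cl → Option X) :
    (s.concat t).terminal f = t.terminal (s.terminal f) := by
  have hs : run (s.concat t).seq f s.len = s.terminal f :=
    run_congr _ _ fun η hη => if_pos hη
  have ht : ∀ η < t.len, (s.concat t).seq (s.len + η) = t.seq η := fun η _ => by
    simp only [concat, add_lt_iff_neg_left, not_lt_zero, if_false, Ordinal.add_sub_cancel]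
  rw [terminal, show (s.concat t).len = s.len + t.len from rfl, run_add, hs]
  exact run_congr _ _ ht

/-- `s` moves the content of cell `H c` to cell `c`. -/
def ActsBy (s : TwistSeq Cl B) (H : Cl → Cl) : Prop :=
  s.terminal (fun c => some c) = some ∘ H

theorem ActsBy.terminal_eq (h : s.ActsBy H) (f : Cl → Option X) : s.terminal f = f ∘ H :=
  funext fun c => run_eq_of_run_some_eq_some s.seq f (congrFun h c)

theorem univConv_iff_exists_actsBy : s.UnivConv ↔ ∃ H, s.ActsBy H := by
  refine ⟨fun h => ?_, fun ⟨H, hH⟩ c => by simp [congrFun hH c]⟩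
  choose H hH using fun c => Option.ne_none_iff_exists'.1 (h c)
  exact ⟨H, funext hH⟩

theorem actsBy_empty : (empty Cl B).ActsBy id :=
  terminal_empty _

theorem ActsBy.concat (hs : s.ActsBy H) (ht : t.ActsBy H') : (s.concat t).ActsBy (H ∘ H') := by
  rw [ActsBy, terminal_concat, hs, ht.terminal_eq]
  rfl

theorem ActsBy.npow (hs : s.ActsBy H) (n : ℕ) : (s.npow n).ActsBy H^[n] := by
  induction n with
  | zero => exact actsBy_empty
  | succ n ih => rw [Function.iterate_succ]; exact ih.concat hs

theorem ActsBy.sim (hs : s.ActsBy H) (ht : t.ActsBy H) : s.Sim t := fun f => by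
  rw [hs.terminal_eq, ht.terminal_eq]

theorem UnivConv.concat (hs : s.UnivConv) (ht : t.UnivConv) : (s.concat t).UnivConv := by
  obtain ⟨H, hH⟩ := univConv_iff_exists_actsBy.1 hs
  obtain ⟨H', hH'⟩ := univConv_iff_exists_actsBy.1 ht
  exact univConv_iff_exists_actsBy.2 ⟨_, hH.concat hH'⟩

theorem Sim.concat (hs : s.Sim s') (ht : t.Sim t') : (s.concat t).Sim (s'.concat t') := fun f => by
  rw [terminal_concat, terminal_concat, hs f, ht]

theorem univConv_of_len_lt_omega0 (h : s.len < ω) : s.UnivConv := by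
  obtain ⟨n, hn⟩ := lt_omega0.1 h
  have := isLegal_run_natCast s.seq (fun c => some c) (fun _ => Option.some_ne_none _) n
  rwa [← hn] at this

end TwistSeq

theorem _root_.Equiv.Perm.pow_exponent_perm_fin_eq_one {α : Type*} [Finite α] {n : ℕ}
    (hα : Nat.card α ≤ n) (e : Equiv.Perm α) : e ^ Monoid.exponent (Equiv.Perm (Fin n)) = 1 := by
  let ι : α ↪ Fin n := (Finite.equivFin α).toEmbedding.trans (Fin.castLEEmb hα)
  rw [← orderOf_dvd_iff_pow_eq_one,
    ← orderOf_injective _ (Equiv.Perm.viaEmbeddingHom_injective ι) e]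
  exact Monoid.order_dvd_exponent _

/-- A signed permutation of the axes: coordinate `j` of `ract r p` is coordinate `(r j).1` of
`p`, reflected iff `(r j).2`. -/
abbrev SignedPerm : Type := Fin 3 → Fin 3 × Bool

namespace SignedPerm

variable {L : Type u}

def condReflect (b : Bool) (x : ExtCoord L) : ExtCoord L :=
  if b then x.reflect else x

theorem condReflect_condReflect (a b : Bool) (x : ExtCoord L) :
    condReflect a (condReflect b x) = condReflect (xor a b) x := by
  cases a <;> cases b <;> simp [condReflect]

def coords (p : Triple L) : Fin 3 → ExtCoord L := ![p.1, p.2.1, p.2.2]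

def ract (r : SignedPerm) (p : Triple L) : Triple L :=
  (condReflect (r 0).2 (coords p (r 0).1), condReflect (r 1).2 (coords p (r 1).1),
    condReflect (r 2).2 (coords p (r 2).1))

theorem coords_ract (r : SignedPerm) (p : Triple L) (j : Fin 3) :
    coords (ract r p) j = condReflect (r j).2 (coords p (r j).1) := by
  fin_cases j <;> rfl

theorem ext_coords {p q : Triple L} (h : ∀ j, coords p j = coords q j) : p = q :=
  Prod.ext (h 0) (Prod.ext (h 1) (h 2))

def comp (a b : SignedPerm) : SignedPerm := fun j => ((b (a j).1).1, xor (a j).2 (b (a j).1).2)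

theorem ract_comp (a b : SignedPerm) (p : Triple L) : ract (comp a b) p = ract a (ract b p) :=
  ext_coords fun j => by simp only [coords_ract, condReflect_condReflect, comp]

def ofAxis : Axis → SignedPerm
  | .x => ![(0, false), (2, true), (1, false)]
  | .y => ![(2, false), (1, false), (0, true)]
  | .z => ![(1, true), (0, false), (2, false)]

theorem ract_ofAxis (i : Axis) (p : Triple L) : ract (ofAxis i) p = rot i p := by
  cases i <;> rfl

/-- The 24 signed permutations of determinant `1`: the rotation group of the cube. -/
def rotations : Finset SignedPerm :=
  {![(0, false), (1, false), (2, false)], ![(0, true), (1, true), (2, false)],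
   ![(0, true), (1, false), (2, true)], ![(0, false), (1, true), (2, true)],
   ![(1, false), (2, false), (0, false)], ![(1, true), (2, true), (0, false)],
   ![(1, true), (2, false), (0, true)], ![(1, false), (2, true), (0, true)],
   ![(2, false), (0, false), (1, false)], ![(2, true), (0, true), (1, false)],
   ![(2, true), (0, false), (1, true)], ![(2, false), (0, true), (1, true)],
   ![(0, true), (2, false), (1, false)], ![(0, false), (2, true), (1, false)],
   ![(0, false), (2, false), (1, true)], ![(0, true), (2, true), (1, true)],
   ![(1, true), (0, false), (2, false)], ![(1, false), (0, true), (2, false)],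
   ![(1, false), (0, false), (2, true)], ![(1, true), (0, true), (2, true)],
   ![(2, true), (1, false), (0, false)], ![(2, false), (1, true), (0, false)],
   ![(2, false), (1, false), (0, true)], ![(2, true), (1, true), (0, true)]}

theorem card_rotations : rotations.card = 24 := by
  decide

theorem one_mem_rotations : ![(0, false), (1, false), (2, false)] ∈ rotations := by
  decide

set_option maxRecDepth 10000 in
theorem comp_ofAxis_mem_rotations (i : Axis) :
    ∀ r ∈ rotations, comp (ofAxis i) r ∈ rotations := by
  cases i <;> decide

end SignedPerm

open SignedPerm

variable {L : Type u}

def rotOrbit (p : Triple L) : Set (Triple L) :=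
  (ract · p) '' rotations

theorem mem_rotOrbit_self (p : Triple L) : p ∈ rotOrbit p :=
  ⟨_, one_mem_rotations, rfl⟩

instance (p : Triple L) : Finite (rotOrbit p) :=
  (Finset.finite_toSet _).image _

theorem ncard_rotOrbit_le (p : Triple L) : (rotOrbit p).ncard ≤ 24 :=
  card_rotations ▸ Set.ncard_coe_finset rotations ▸ Set.ncard_image_le (Finset.finite_toSet _)

theorem rotInv_eq_rot_rot_rot (i : Axis) (p : Triple L) :
    rotInv i p = rot i (rot i (rot i p)) := by
  cases i <;> simp [rot, rotInv]

theorem rot_mem_rotOrbit {p q : Triple L} (i : Axis) (hq : q ∈ rotOrbit p) :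
    rot i q ∈ rotOrbit p := by
  obtain ⟨r, hr, rfl⟩ := hq
  exact ⟨_, comp_ofAxis_mem_rotations i r hr, (ract_comp _ _ _).trans (ract_ofAxis _ _)⟩

theorem rot_mem_rotOrbit_iff {p q : Triple L} (i : Axis) :
    rot i q ∈ rotOrbit p ↔ q ∈ rotOrbit p := by
  refine ⟨fun h => ?_, rot_mem_rotOrbit i⟩
  simpa [← rotInv_eq_rot_rot_rot] using
    rot_mem_rotOrbit i (rot_mem_rotOrbit i (rot_mem_rotOrbit i h))

theorem qtTriple_mem_rotOrbit_iff {p q : Triple L} (i : Axis) (α : ExtCoord L) :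
    qtTriple i α q ∈ rotOrbit p ↔ q ∈ rotOrbit p := by
  unfold qtTriple
  split_ifs
  exacts [rot_mem_rotOrbit_iff i, Iff.rfl]

def cellRotOrbit (c : Cell L) : Set (Cell L) :=
  {d | d.1 ∈ rotOrbit c.1}

theorem IsBasic.apply_mem_cellRotOrbit_iff {π : Equiv.Perm (Cell L)} (hπ : IsBasic L π)
    (c d : Cell L) : π d ∈ cellRotOrbit c ↔ d ∈ cellRotOrbit c := by
  have hq : ∀ i α (d : Cell L), quarterTurn i α d ∈ cellRotOrbit c ↔ d ∈ cellRotOrbit c :=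
    fun i α d => qtTriple_mem_rotOrbit_iff i α
  obtain ⟨i, α, rfl | rfl | rfl⟩ := hπ
  · exact hq i α d
  · rw [sq, Equiv.Perm.mul_apply, hq, hq]
  · rw [← hq i α, ← Equiv.Perm.mul_apply, mul_inv_cancel, Equiv.Perm.one_apply]

instance (c : Cell L) : Finite (cellRotOrbit c) :=
  Set.Finite.preimage Subtype.val_injective.injOn (Set.toFinite (rotOrbit c.1))

theorem card_cellRotOrbit_le (c : Cell L) : Nat.card (cellRotOrbit c) ≤ 24 := by
  rw [Nat.card_coe_set_eq]
  exact (Set.ncard_le_ncard_of_injOn (t := rotOrbit c.1) Subtype.val (fun _ h => h)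
    Subtype.val_injective.injOn).trans (ncard_rotOrbit_le c.1)

theorem BasicSeq.exists_actsBy_iterate_exponent_eq_id {s : BasicSeq L} (hs : s.UnivConv) :
    ∃ H, s.ActsBy H ∧ H^[Monoid.exponent (Equiv.Perm (Fin 24))] = id := by
  obtain ⟨H, hH⟩ := TwistSeq.univConv_iff_exists_actsBy.1 hs
  refine ⟨H, hH, funext fun c => ?_⟩
  obtain ⟨e, he⟩ := exists_perm_run_some_eq s.seq (Set.toFinite _)
    (fun η hη => (s.basic η hη).apply_mem_cellRotOrbit_iff c) fun d _ => hs d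
  have hsemi : Function.Semiconj Subtype.val e H := fun d =>
    Option.some_injective _ ((he d).symm.trans (congrFun hH d))
  have := hsemi.iterate_right (Monoid.exponent (Equiv.Perm (Fin 24))) ⟨c, mem_rotOrbit_self c.1⟩
  rwa [← Equiv.Perm.coe_pow, e.pow_exponent_perm_fin_eq_one (card_cellRotOrbit_le c),
    Equiv.Perm.coe_one, id, eq_comm] at this

end InfRubik

open InfRubik in
theorem univConv_quotient_group_general {L : Type u}
    (k : ℕ) (hk : k = (Finset.univ : Finset (Equiv.Perm (Fin 24))).lcm orderOf) :
    -- the universally convergent sequences are closed under concatenation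
    (∀ s t : BasicSeq L, s.UnivConv → t.UnivConv → (s.concat t).UnivConv) ∧
    -- concatenation is a congruence with respect to ∼ (so it induces an operation on the
    -- quotient, which is a monoid)
    (∀ s s' t t' : BasicSeq L, s.UnivConv → t.UnivConv → s.Sim s' → t.Sim t' →
      (s.concat t).Sim (s'.concat t')) ∧
    -- the quotient extends the group generated by the finite basic sequences
    (∀ s : BasicSeq L, s.len < Ordinal.omega0 → s.UnivConv) ∧
    -- existence of inverses: σ⃗^{k-1} is universally convergent, σ⃗^k ∼ ε, and σ⃗^{k-1}
    -- is a two-sided inverse of σ⃗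
    (∀ s : BasicSeq L, s.UnivConv →
      (s.npow (k - 1)).UnivConv ∧
      (s.npow k).Sim (TwistSeq.empty (Cell L) (IsBasic L)) ∧
      ((s.npow (k - 1)).concat s).Sim (TwistSeq.empty (Cell L) (IsBasic L)) ∧
      (s.concat (s.npow (k - 1))).Sim (TwistSeq.empty (Cell L) (IsBasic L))) := by
  rw [Monoid.lcm_orderOf_eq_exponent] at hk
  refine ⟨fun s t hs ht => hs.concat ht, fun s s' t t' _ _ hs ht => hs.concat ht,
    fun s hs => TwistSeq.univConv_of_len_lt_omega0 hs, fun s hs => ?_⟩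
  obtain ⟨H, hH, hHk⟩ := BasicSeq.exists_actsBy_iterate_exponent_eq_id hs
  rw [← hk] at hHk
  have hk' : k - 1 + 1 = k :=
    Nat.sub_add_cancel (Nat.pos_of_ne_zero (hk ▸ Monoid.exponent_ne_zero_of_finite))
  have hsim_empty : ∀ {t : BasicSeq L} {H'}, t.ActsBy H' → H' = H^[k] →
      t.Sim (TwistSeq.empty _ _) :=
    fun ht hH' => ht.sim (by rw [hH', hHk]; exact TwistSeq.actsBy_empty)
  refine ⟨TwistSeq.univConv_iff_exists_actsBy.2 ⟨_, hH.npow _⟩, hsim_empty (hH.npow k) rfl,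
    hsim_empty ((hH.npow _).concat hH) ?_, hsim_empty (hH.concat (hH.npow _)) ?_⟩
  · rw [← Function.iterate_succ, Nat.succ_eq_add_one, hk']
  · rw [← Function.iterate_succ', Nat.succ_eq_add_one, hk']

open InfRubik in
/-- The universally convergent basic sequences on the edgeless cube modulo `∼`, with the
operation induced by concatenation, form a group extending the group generated by the
finite basic sequences; with `k` the least common multiple of the orders of the elements
of `S₂₄`, the `(k-1)`-fold self-concatenation of a universally convergent sequence is
universally convergent and represents a two-sided inverse (so `σ⃗^k ∼ ε` and every
element of the quotient group has order at most `k`). -/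
theorem univConv_quotient_group {L : Type u} [Infinite L]
    (k : ℕ) (hk : k = (Finset.univ : Finset (Equiv.Perm (Fin 24))).lcm orderOf) :
    -- the universally convergent sequences are closed under concatenation
    (∀ s t : BasicSeq L, s.UnivConv → t.UnivConv → (s.concat t).UnivConv) ∧
    -- concatenation is a congruence with respect to ∼ (so it induces an operation on the
    -- quotient, which is a monoid)
    (∀ s s' t t' : BasicSeq L, s.UnivConv → t.UnivConv → s.Sim s' → t.Sim t' →
      (s.concat t).Sim (s'.concat t')) ∧
    -- the quotient extends the group generated by the finite basic sequences
    (∀ s : BasicSeq L, s.len < Ordinal.omega0 → s.UnivConv) ∧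
    -- existence of inverses: σ⃗^{k-1} is universally convergent, σ⃗^k ∼ ε, and σ⃗^{k-1}
    -- is a two-sided inverse of σ⃗
    (∀ s : BasicSeq L, s.UnivConv →
      (s.npow (k - 1)).UnivConv ∧
      (s.npow k).Sim (TwistSeq.empty (Cell L) (IsBasic L)) ∧
      ((s.npow (k - 1)).concat s).Sim (TwistSeq.empty (Cell L) (IsBasic L)) ∧
      (s.concat (s.npow (k - 1))).Sim (TwistSeq.empty (Cell L) (IsBasic L))) :=
  univConv_quotient_group_general k hk
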